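/- arXiv:0801.3249 — 4 statements merged into one kernel-verified Lean document; each statement's English description precedes it below -/
import Mathlib

section
/- The 5×5 matrix A with rows (a, 1-2a, a, 0, 0), (0, 1/2, 1/2, 0, 0), (0, a, 1-2a, a, 0), (0, 0, 1/2, 1/2, 0), (0, 0, a, 1-2a, a), where a is a real parameter, has characteristic polynomial (λ-1)(λ-1/2)(λ-(1/2-2a))(λ-a)² ; in particular all its eigenvalues are real. -/
open Polynomial Matrix

noncomputable def localSubdivisionMatrix (a : ℝ) : Matrix (Fin 5) (Fin 5) ℝ :=
  !![a, 1-2*a, a, 0, 0;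
     0, 1/2, 1/2, 0, 0;
     0, a, 1-2*a, a, 0;
     0, 0, 1/2, 1/2, 0;
     0, 0, a, 1-2*a, a]

theorem charpoly_localSubdivisionMatrix (a : ℝ) :
    (localSubdivisionMatrix a).charpoly =
      (X - C 1) * (X - C (1/2)) * (X - C (1/2 - 2*a)) * (X - C a)^2 := by
  refine Polynomial.funext fun t ↦ ?_
  rw [eval_charpoly]
  simp [localSubdivisionMatrix, det_succ_column_zero, Fin.sum_univ_succ, Fin.succAbove]
  ring

theorem Polynomial.Splits.im_eq_zero_of_isRoot_map_ofReal {p : ℝ[X]} (hp : p.Splits)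
    (hp0 : p ≠ 0) {z : ℂ} (hz : (p.map Complex.ofRealHom).IsRoot z) : z.im = 0 := by
  obtain ⟨r, rfl⟩ := hp.mem_range_of_isRoot hp0 hz
  exact Complex.ofReal_im r

theorem stmt0 (a : ℝ) :
    let A : Matrix (Fin 5) (Fin 5) ℝ :=
      !![a, 1-2*a, a, 0, 0;
         0, 1/2, 1/2, 0, 0;
         0, a, 1-2*a, a, 0;
         0, 0, 1/2, 1/2, 0;
         0, 0, a, 1-2*a, a]
    A.charpoly = (X - C 1) * (X - C (1/2)) * (X - C (1/2 - 2*a)) * (X - C a)^2 ∧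
    ∀ z : ℂ, ((A.map (Complex.ofReal)).charpoly).IsRoot z → z.im = 0 := by
  intro A
  have hA : A.charpoly = _ := charpoly_localSubdivisionMatrix a
  have hsplit : A.charpoly.Splits := by
    rw [hA]
    exact (((Splits.X_sub_C _).mul (Splits.X_sub_C _)).mul (Splits.X_sub_C _)).mul
      ((Splits.X_sub_C _).pow 2)
  refine ⟨hA, fun z hz ↦ hsplit.im_eq_zero_of_isRoot_map_ofReal (charpoly_monic A).ne_zero ?_⟩
  rwa [← charpoly_map]
end

section
/- For every real number a, all eigenvalues of the 5×5 real matrix with rows (a, 1-2a, a, 0, 0), (0, 1/2, 1/2, 0, 0), (0, a, 1-2a, a, 0), (0, 0, 1/2, 1/2, 0), (0, 0, a, 1-2a, a) are real (i.e., the complex eigenvalues of this matrix, viewed over ℂ, all have imaginary part zero). -/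
/-!
Columns 0 and 4 carry only the diagonal entry `a`, so the characteristic polynomial is
`(X - a)²` times that of the tridiagonal middle block, which factors as
`(X - 1)(X - 1/2)(X - (1/2 - 2a))`. A real polynomial that splits over `ℝ` has only real roots
in `ℂ`.
-/

open Polynomial Matrix

theorem Matrix.im_eq_zero_of_isRoot_charpoly_map_ofReal {n : Type*} [Fintype n] [DecidableEq n]
    {M : Matrix n n ℝ} (hM : M.charpoly.Splits) {z : ℂ}
    (hz : (M.map Complex.ofReal).charpoly.IsRoot z) : z.im = 0 := by
  rw [show M.map Complex.ofReal = M.map Complex.ofRealHom from rfl, charpoly_map] at hz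
  obtain ⟨r, rfl⟩ := hM.mem_range_of_isRoot M.charpoly_monic.ne_zero hz
  simp

noncomputable def stencilMatrix (a : ℝ) : Matrix (Fin 5) (Fin 5) ℝ :=
  !![a, 1-2*a, a, 0, 0;
     0, 1/2, 1/2, 0, 0;
     0, a, 1-2*a, a, 0;
     0, 0, 1/2, 1/2, 0;
     0, 0, a, 1-2*a, a]

theorem charpoly_stencilMatrix (a : ℝ) :
    (stencilMatrix a).charpoly =
      (X - C a) ^ 2 * (X - 1) * (X - C (1/2)) * (X - C (1/2 - 2*a)) := by
  refine Polynomial.funext fun x => ?_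
  rw [Matrix.charpoly, ← coe_evalRingHom, RingHom.map_det]
  simp [det_succ_row_zero, Fin.sum_univ_succ, Fin.succAbove, stencilMatrix, charmatrix_apply]
  ring

theorem splits_charpoly_stencilMatrix (a : ℝ) : (stencilMatrix a).charpoly.Splits := by
  rw [charpoly_stencilMatrix, ← C_1]
  exact ((((Splits.X_sub_C a).pow 2).mul (Splits.X_sub_C 1)).mul (Splits.X_sub_C _)).mul
    (Splits.X_sub_C _)

theorem stmt1 (a : ℝ) :
    ∀ z : ℂ,
      (((!![a, 1-2*a, a, 0, 0;
            0, 1/2, 1/2, 0, 0;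
            0, a, 1-2*a, a, 0;
            0, 0, 1/2, 1/2, 0;
            0, 0, a, 1-2*a, a] : Matrix (Fin 5) (Fin 5) ℝ).map
          (Complex.ofReal)).charpoly).IsRoot z → z.im = 0 :=
  fun _ => im_eq_zero_of_isRoot_charpoly_map_ofReal (splits_charpoly_stencilMatrix a)
end

section
/- The 6×6 matrix A with rows (-1/10, 4/5, 3/10, 0, 0, 0), (0, 3/10, 4/5, -1/10, 0, 0), (0, -1/10, 4/5, 3/10, 0, 0), (0, 0, 3/10, 4/5, -1/10, 0), (0, 0, -1/10, 4/5, 3/10, 0), (0, 0, 0, 3/10, 4/5, -1/10) has eigenvalues (over ℂ) exactly -1/10 (with algebraic multiplicity 2), 2/5, 1, (2 - i√2)/5, and (2 + i√2)/5. -/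
/-!
The first and last columns of `A` vanish off the diagonal, where they carry `-1/10`; expanding
the determinant along them leaves the central `4 × 4` block, whose characteristic polynomial
factors over `ℝ` as `(X - 2/5) (X - 1) (X² - 4/5 X + 6/25)`. The quadratic factor has
discriminant `-8/25`, and its complex roots are `(2 ± i√2)/5`.
-/

open Polynomial Matrix

noncomputable def subdivA : Matrix (Fin 6) (Fin 6) ℝ :=
  !![-1/10, 4/5, 3/10, 0, 0, 0;
     0, 3/10, 4/5, -1/10, 0, 0;
     0, -1/10, 4/5, 3/10, 0, 0;
     0, 0, 3/10, 4/5, -1/10, 0;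
     0, 0, -1/10, 4/5, 3/10, 0;
     0, 0, 0, 3/10, 4/5, -1/10]

lemma X_sub_C_mul_X_sub_C {R : Type*} [CommRing R] (a b : R) :
    (X - C a) * (X - C b) = X ^ 2 - C (a + b) * X + C (a * b) := by
  simp only [C_add, C_mul]
  ring

lemma scalar_sub_subdivA (z : ℝ) :
    scalar (Fin 6) z - subdivA =
      !![z + 1/10, -4/5, -3/10, 0, 0, 0;
         0, z - 3/10, -4/5, 1/10, 0, 0;
         0, 1/10, z - 4/5, -3/10, 0, 0;
         0, 0, -3/10, z - 4/5, 1/10, 0;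
         0, 0, 1/10, -4/5, z - 3/10, 0;
         0, 0, 0, -3/10, -4/5, z + 1/10] := by
  ext i j
  fin_cases i <;> fin_cases j <;> norm_num [subdivA]

lemma charpoly_subdivA :
    subdivA.charpoly =
      (X - C (-1/10)) ^ 2 * (X - C (2/5)) * (X - C 1) * (X ^ 2 - C (4/5) * X + C (6/25)) := by
  refine Polynomial.funext fun z => ?_
  rw [eval_charpoly, scalar_sub_subdivA]
  simp only [one_div, det_succ_column_zero, Nat.succ_eq_add_one, Nat.reduceAdd, Fin.isValue, of_apply,
    cons_val', cons_val_zero, cons_val_fin_one, submatrix_apply, Fin.succAbove, Fin.castSucc, Fin.castAdd,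
    Fin.castLE, Fin.succ_zero_eq_one, cons_val_one, submatrix_submatrix, Function.comp_apply,
    Fin.succ_one_eq_two, cons_val, Fin.reduceSucc, det_unique, Fin.default_eq_zero, Fin.val_eq_zero,
    Fin.zero_eta, Fin.sum_univ_succ, Fin.coe_ofNat_eq_mod, Nat.zero_mod, pow_zero, one_mul,
    lt_self_iff_false, ↓reduceIte, Nat.mod_succ, Fin.mk_one, Finset.univ_unique, Fin.val_succ, zero_add,
    pow_one, neg_mul, Fin.succ_pos, Finset.sum_neg_distrib, Finset.sum_singleton, Nat.one_mod, not_lt_zero,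
    Fin.reduceFinMk, even_two, Even.neg_pow, one_pow, Fin.reduceLT, Nat.reduceMod, Fin.lt_one_iff,
    Fin.reduceEq, mul_zero, neg_zero, add_zero, zero_mul, cons_val_succ, Finset.sum_const_zero, map_one,
    eval_mul, eval_pow, eval_sub, eval_X, eval_C, eval_one, eval_add]
  ring

lemma X_sub_C_mul_X_sub_C_two_sub_I_sqrt_two :
    (X - C ((2 - Complex.I * Real.sqrt 2) / 5)) * (X - C ((2 + Complex.I * Real.sqrt 2) / 5)) =
      X ^ 2 - C (4/5) * X + C (6/25 : ℂ) := by
  have hsqrt : ((Real.sqrt 2 : ℝ) : ℂ) ^ 2 = 2 := by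
    rw [← Complex.ofReal_pow, Real.sq_sqrt zero_le_two]
    norm_num
  have hsum : (2 - Complex.I * Real.sqrt 2) / 5 + (2 + Complex.I * Real.sqrt 2) / 5 = 4/5 := by ring
  have hprod : (2 - Complex.I * Real.sqrt 2) / 5 * ((2 + Complex.I * Real.sqrt 2) / 5) = 6/25 := by
    linear_combination (-(Complex.I ^ 2) / 25) * hsqrt - 2/25 * Complex.I_sq
  rw [X_sub_C_mul_X_sub_C, hsum, hprod]

theorem stmt5 :
    (subdivA.map (Complex.ofReal)).charpoly =
      (X - C (-1/10))^2 * (X - C (2/5)) * (X - C 1) *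
        (X - C ((2 - Complex.I * Real.sqrt 2)/5)) *
        (X - C ((2 + Complex.I * Real.sqrt 2)/5)) := by
  rw [mul_assoc _ (X - C _), X_sub_C_mul_X_sub_C_two_sub_I_sqrt_two]
  have hmap : subdivA.map Complex.ofReal = subdivA.map Complex.ofRealHom := rfl
  rw [hmap, charpoly_map, charpoly_subdivA]
  simp
end

section
/- The 6×6 matrix A with rows (-1/10, 4/5, 3/10, 0, 0, 0), (0, 3/10, 4/5, -1/10, 0, 0), (0, -1/10, 4/5, 3/10, 0, 0), (0, 0, 3/10, 4/5, -1/10, 0), (0, 0, -1/10, 4/5, 3/10, 0), (0, 0, 0, 3/10, 4/5, -1/10), viewed over ℂ, has an eigenvalue with nonzero imaginary part, namely (2 + i√2)/5. -/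
open Polynomial Matrix

theorem Matrix.isRoot_charpoly_of_mulVec_eq_smul {R n : Type*} [CommRing R] [IsDomain R]
    [Fintype n] [DecidableEq n] {A : Matrix n n R} {μ : R} {v : n → R} (hv : v ≠ 0)
    (hAv : A *ᵥ v = μ • v) : A.charpoly.IsRoot μ := by
  rw [IsRoot.def, eval_charpoly, ← exists_mulVec_eq_zero_iff]
  exact ⟨v, hv, by simp [sub_mulVec, hAv]⟩

def subdivEigenvector (t : ℂ) : Fin 6 → ℂ :=
  ![-211, -133 - 40 * t, 3 - 34 * t, -3 + 34 * t, 133 + 40 * t, 211]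

lemma subdivEigenvector_ne_zero (t : ℂ) : subdivEigenvector t ≠ 0 := fun h => by
  simpa [subdivEigenvector] using congrFun h 0

lemma subdivA_mulVec_subdivEigenvector {t : ℂ} (ht : t ^ 2 = -2) :
    subdivA.map Complex.ofReal *ᵥ subdivEigenvector t = ((2 + t) / 5) • subdivEigenvector t := by
  ext i
  fin_cases i <;> simp [subdivA, subdivEigenvector, mulVec, dotProduct, Fin.sum_univ_six]
  · ring
  · linear_combination 8 * ht
  · linear_combination 34 / 5 * ht
  · linear_combination -34 / 5 * ht
  · linear_combination -8 * ht
  · ring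

theorem stmt6 :
    ((subdivA.map (Complex.ofReal)).charpoly).IsRoot ((2 + Complex.I * Real.sqrt 2)/5) ∧
    ((2 + Complex.I * Real.sqrt 2)/5 : ℂ).im ≠ 0 := by
  have ht : (Complex.I * Real.sqrt 2) ^ 2 = -2 := by
    rw [mul_pow, Complex.I_sq, ← Complex.ofReal_pow, Real.sq_sqrt zero_le_two]
    push_cast
    ring
  refine ⟨isRoot_charpoly_of_mulVec_eq_smul (subdivEigenvector_ne_zero _)
    (subdivA_mulVec_subdivEigenvector ht), ?_⟩
  simp
end
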